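/- Let A = ∑_{n≥1} g_n * (27/256)^n. Then the ratio (∑_{k=0}^{n} g_k * g_{n-k}) / g_n tends to 2*A as n → ∞, and 2*A > 0. (In generating-function language: [x^n](g(x))^2 / [x^n]g(x) converges to a positive constant, so the maps counted by (g(x))^2 with 2n+2 faces form a positive asymptotic fraction of all rooted 3-connected triangulations with 2n+2 faces.) -/
import Mathlib


open Filter Topology

/-- `gseq n` is the number `g_n = 2·(4n+1)!/((n+1)!·(3n+2)!)` of rooted 3-connected
planar triangulations with `2n+2` faces (as a real number), with `g_0 = 0`. -/
noncomputable def gseq (n : ℕ) : ℝ :=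
  if n = 0 then 0
  else 2 * (Nat.factorial (4 * n + 1)) / ((Nat.factorial (n + 1)) * (Nat.factorial (3 * n + 2)))

namespace Stmt5Aux

lemma gseq_pos {n : ℕ} (hn : n ≠ 0) : 0 < gseq n := by
  rw [gseq, if_neg hn]
  have h1 : (0:ℝ) < (Nat.factorial (4 * n + 1) : ℝ) := by
    exact_mod_cast Nat.factorial_pos _
  have h2 : (0:ℝ) < (Nat.factorial (n + 1) : ℝ) := by exact_mod_cast Nat.factorial_pos _
  have h3 : (0:ℝ) < (Nat.factorial (3 * n + 2) : ℝ) := by exact_mod_cast Nat.factorial_pos _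
  positivity

lemma gseq_nonneg (n : ℕ) : 0 ≤ gseq n := by
  rcases eq_or_ne n 0 with h | h
  · simp [gseq, h]
  · exact (gseq_pos h).le

lemma grec (n : ℕ) (hn : n ≠ 0) :
    gseq (n + 1) * (((n : ℝ) + 2) * (3 * n + 3) * (3 * n + 4) * (3 * n + 5)) =
      gseq n * ((4 * (n : ℝ) + 2) * (4 * n + 3) * (4 * n + 4) * (4 * n + 5)) := by
  rw [gseq, gseq, if_neg hn, if_neg (Nat.succ_ne_zero n)]
  have h4 : 4 * (n + 1) + 1 = (4 * n + 1) + 1 + 1 + 1 + 1 := by ring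
  have h3 : 3 * (n + 1) + 2 = (3 * n + 2) + 1 + 1 + 1 := by ring
  have h1 : (n + 1) + 1 = n + 1 + 1 := rfl
  rw [h4, h3]
  simp only [Nat.factorial_succ]
  have e1 : ((Nat.factorial (4 * n + 1) : ℝ)) ≠ 0 := by
    exact_mod_cast (Nat.factorial_pos _).ne'
  have e2 : ((Nat.factorial (n + 1) : ℝ)) ≠ 0 := by
    exact_mod_cast (Nat.factorial_pos _).ne'
  have e3 : ((Nat.factorial (3 * n + 2) : ℝ)) ≠ 0 := by
    exact_mod_cast (Nat.factorial_pos _).ne'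
  push_cast
  field_simp
  ring

/-- `cseq n = gseq n · (27/256)^n`. -/
noncomputable def cseq (n : ℕ) : ℝ := gseq n * (27 / 256) ^ n

lemma cseq_pos {n : ℕ} (hn : n ≠ 0) : 0 < cseq n := by
  have := gseq_pos hn
  rw [cseq]; positivity

lemma cseq_nonneg (n : ℕ) : 0 ≤ cseq n :=
  mul_nonneg (gseq_nonneg n) (by positivity)

lemma crec (n : ℕ) (hn : n ≠ 0) :
    cseq (n + 1) * (256 * (((n : ℝ) + 2) * (3 * n + 3) * (3 * n + 4) * (3 * n + 5))) =
      cseq n * (27 * ((4 * (n : ℝ) + 2) * (4 * n + 3) * (4 * n + 4) * (4 * n + 5))) := by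
  have h := grec n hn
  simp only [cseq, pow_succ]
  linear_combination ((27 / 256 : ℝ) ^ n * 27) * h

lemma step_le (n : ℕ) (hn : n ≠ 0) : cseq (n + 1) ≤ cseq n := by
  have h := crec n hn
  have hx : (0:ℝ) ≤ (n:ℝ) := Nat.cast_nonneg n
  have hD : (0:ℝ) < 256 * (((n : ℝ) + 2) * (3 * n + 3) * (3 * n + 4) * (3 * n + 5)) := by
    positivity
  have hc : 0 ≤ cseq n := cseq_nonneg n
  have hNle : 27 * ((4 * (n:ℝ) + 2) * (4 * n + 3) * (4 * n + 4) * (4 * n + 5)) ≤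
      256 * (((n : ℝ) + 2) * (3 * n + 3) * (3 * n + 4) * (3 * n + 5)) := by
    nlinarith [hx, mul_nonneg hx hx, mul_nonneg (mul_nonneg hx hx) hx,
      mul_nonneg (mul_nonneg (mul_nonneg hx hx) hx) hx]
  have h2 : cseq (n+1) * (256 * (((n : ℝ) + 2) * (3 * n + 3) * (3 * n + 4) * (3 * n + 5))) ≤
      cseq n * (256 * (((n : ℝ) + 2) * (3 * n + 3) * (3 * n + 4) * (3 * n + 5))) := by
    rw [h]; exact mul_le_mul_of_nonneg_left hNle hc
  exact le_of_mul_le_mul_right h2 hD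

lemma step_ge (n : ℕ) (hn : n ≠ 0) :
    cseq n * (n:ℝ) ≤ cseq (n + 1) * ((n:ℝ) + 13) := by
  have h := crec n hn
  have hx : (0:ℝ) ≤ (n:ℝ) := Nat.cast_nonneg n
  have hc1 : 0 ≤ cseq (n+1) := cseq_nonneg (n+1)
  have hN : (0:ℝ) < 27 * ((4 * (n:ℝ) + 2) * (4 * n + 3) * (4 * n + 4) * (4 * n + 5)) := by
    positivity
  have key : 256 * (((n : ℝ) + 2) * (3 * n + 3) * (3 * n + 4) * (3 * n + 5)) * (n:ℝ) ≤
      27 * ((4 * (n:ℝ) + 2) * (4 * n + 3) * (4 * n + 4) * (4 * n + 5)) * ((n:ℝ) + 13) := by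
    nlinarith [hx, mul_nonneg hx hx, mul_nonneg (mul_nonneg hx hx) hx,
      mul_nonneg (mul_nonneg (mul_nonneg hx hx) hx) hx]
  have h2 :
      cseq (n+1) * (256 * (((n : ℝ) + 2) * (3 * n + 3) * (3 * n + 4) * (3 * n + 5)) * (n:ℝ)) ≤
      cseq (n+1) * (27 * ((4 * (n:ℝ) + 2) * (4 * n + 3) * (4 * n + 4) * (4 * n + 5)) * ((n:ℝ) + 13)) :=
    mul_le_mul_of_nonneg_left key hc1
  have h3 : cseq n * (n:ℝ) * (27 * ((4 * (n:ℝ) + 2) * (4 * n + 3) * (4 * n + 4) * (4 * n + 5))) ≤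
      cseq (n+1) * ((n:ℝ) + 13) * (27 * ((4 * (n:ℝ) + 2) * (4 * n + 3) * (4 * n + 4) * (4 * n + 5))) := by
    calc cseq n * (n:ℝ) * (27 * ((4 * (n:ℝ) + 2) * (4 * n + 3) * (4 * n + 4) * (4 * n + 5)))
        = cseq (n+1) * (256 * (((n : ℝ) + 2) * (3 * n + 3) * (3 * n + 4) * (3 * n + 5)) * (n:ℝ)) := by
          linear_combination (-(n:ℝ)) * h
      _ ≤ cseq (n+1) * (27 * ((4 * (n:ℝ) + 2) * (4 * n + 3) * (4 * n + 4) * (4 * n + 5)) * ((n:ℝ) + 13)) := h2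
      _ = cseq (n+1) * ((n:ℝ) + 13) * (27 * ((4 * (n:ℝ) + 2) * (4 * n + 3) * (4 * n + 4) * (4 * n + 5))) := by
          ring
  exact le_of_mul_le_mul_right h3 hN

lemma decay (n : ℕ) (hn : 11 ≤ n) :
    cseq (n + 1) * (n:ℝ) ≤ cseq n * ((n:ℝ) - 2) := by
  have hn0 : n ≠ 0 := by omega
  have h := crec n hn0
  have hx : (0:ℝ) ≤ (n:ℝ) := Nat.cast_nonneg n
  have h11 : (11:ℝ) ≤ (n:ℝ) := by exact_mod_cast hn
  have ht : (0:ℝ) ≤ (n:ℝ) - 11 := by linarith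
  have hc : 0 ≤ cseq n := cseq_nonneg n
  have hD : (0:ℝ) < 256 * (((n : ℝ) + 2) * (3 * n + 3) * (3 * n + 4) * (3 * n + 5)) := by
    positivity
  have key : 27 * ((4 * (n:ℝ) + 2) * (4 * n + 3) * (4 * n + 4) * (4 * n + 5)) * (n:ℝ) ≤
      256 * (((n : ℝ) + 2) * (3 * n + 3) * (3 * n + 4) * (3 * n + 5)) * ((n:ℝ) - 2) := by
    nlinarith [ht, mul_nonneg ht ht, mul_nonneg (mul_nonneg ht ht) ht,
      mul_nonneg (mul_nonneg (mul_nonneg ht ht) ht) ht]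
  have h2 : cseq n * (27 * ((4 * (n:ℝ) + 2) * (4 * n + 3) * (4 * n + 4) * (4 * n + 5)) * (n:ℝ)) ≤
      cseq n * (256 * (((n : ℝ) + 2) * (3 * n + 3) * (3 * n + 4) * (3 * n + 5)) * ((n:ℝ) - 2)) :=
    mul_le_mul_of_nonneg_left key hc
  have h3 : cseq (n+1) * (n:ℝ) * (256 * (((n : ℝ) + 2) * (3 * n + 3) * (3 * n + 4) * (3 * n + 5))) ≤
      cseq n * ((n:ℝ) - 2) * (256 * (((n : ℝ) + 2) * (3 * n + 3) * (3 * n + 4) * (3 * n + 5))) := by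
    calc cseq (n+1) * (n:ℝ) * (256 * (((n : ℝ) + 2) * (3 * n + 3) * (3 * n + 4) * (3 * n + 5)))
        = cseq n * (27 * ((4 * (n:ℝ) + 2) * (4 * n + 3) * (4 * n + 4) * (4 * n + 5)) * (n:ℝ)) := by
          linear_combination (n:ℝ) * h
      _ ≤ cseq n * (256 * (((n : ℝ) + 2) * (3 * n + 3) * (3 * n + 4) * (3 * n + 5)) * ((n:ℝ) - 2)) := h2
      _ = cseq n * ((n:ℝ) - 2) * (256 * (((n : ℝ) + 2) * (3 * n + 3) * (3 * n + 4) * (3 * n + 5))) := by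
          ring
  exact le_of_mul_le_mul_right h3 hD

lemma exp_bound (m : ℕ) (hm : m ≠ 0) (n : ℕ) (hn : m ≤ n) :
    cseq m ≤ cseq n * Real.exp (13 * ∑ j ∈ Finset.Ico m n, (1 : ℝ) / j) := by
  induction n, hn using Nat.le_induction with
  | base => simp
  | succ n hmn ih =>
    have hn0 : n ≠ 0 := by omega
    have hx : (0:ℝ) < (n:ℝ) := by exact_mod_cast Nat.pos_of_ne_zero hn0
    have h1 : cseq n ≤ cseq (n+1) * Real.exp (13 / (n:ℝ)) := by
      have hg := step_ge n hn0
      have hstep : cseq n ≤ cseq (n+1) * (1 + 13 / (n:ℝ)) := by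
        rw [show cseq (n+1) * (1 + 13 / (n:ℝ)) = cseq (n+1) * ((n:ℝ) + 13) / (n:ℝ) by
          field_simp]
        rw [le_div_iff₀ hx]
        exact hg
      have he : (1:ℝ) + 13 / (n:ℝ) ≤ Real.exp (13 / (n:ℝ)) := by
        have := Real.add_one_le_exp (13 / (n:ℝ)); linarith
      exact hstep.trans (mul_le_mul_of_nonneg_left he (cseq_nonneg _))
    calc cseq m ≤ cseq n * Real.exp (13 * ∑ j ∈ Finset.Ico m n, (1:ℝ)/j) := ih
      _ ≤ (cseq (n+1) * Real.exp (13 / (n:ℝ))) * Real.exp (13 * ∑ j ∈ Finset.Ico m n, (1:ℝ)/j) :=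
          mul_le_mul_of_nonneg_right h1 (Real.exp_pos _).le
      _ = cseq (n+1) * Real.exp (13 * ∑ j ∈ Finset.Ico m (n+1), (1:ℝ)/j) := by
          rw [mul_assoc, ← Real.exp_add]
          congr 2
          rw [Finset.sum_Ico_succ_top hmn]
          ring

lemma half_bound {m n : ℕ} (hm : m ≠ 0) (hmn : m ≤ n) (h2 : n ≤ 2 * m) :
    cseq m ≤ cseq n * Real.exp 13 := by
  refine (exp_bound m hm n hmn).trans
    (mul_le_mul_of_nonneg_left (Real.exp_le_exp.2 ?_) (cseq_nonneg n))
  have hmr : (0:ℝ) < (m:ℝ) := by exact_mod_cast Nat.pos_of_ne_zero hm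
  have hsum : ∑ j ∈ Finset.Ico m n, (1:ℝ)/j ≤ ((n - m : ℕ) : ℝ) * (1/(m:ℝ)) := by
    calc ∑ j ∈ Finset.Ico m n, (1:ℝ)/j ≤ ∑ _j ∈ Finset.Ico m n, (1:ℝ)/(m:ℝ) := by
          apply Finset.sum_le_sum
          intro j hj
          have hmj : m ≤ j := (Finset.mem_Ico.1 hj).1
          have : (m:ℝ) ≤ (j:ℝ) := by exact_mod_cast hmj
          exact one_div_le_one_div_of_le hmr this
      _ = ((n - m : ℕ) : ℝ) * (1/(m:ℝ)) := by
          rw [Finset.sum_const, Nat.card_Ico, nsmul_eq_mul]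
  have hcard : ((n - m : ℕ) : ℝ) ≤ (m:ℝ) := by exact_mod_cast (by omega : n - m ≤ m)
  have : ∑ j ∈ Finset.Ico m n, (1:ℝ)/j ≤ 1 := by
    calc ∑ j ∈ Finset.Ico m n, (1:ℝ)/j ≤ ((n - m : ℕ) : ℝ) * (1/(m:ℝ)) := hsum
      _ ≤ (m:ℝ) * (1/(m:ℝ)) := mul_le_mul_of_nonneg_right hcard (by positivity)
      _ = 1 := by field_simp
  linarith

lemma summable_cseq : Summable cseq := by
  have key : ∀ n, 11 ≤ n → cseq n * (((n:ℝ) - 1) * ((n:ℝ) - 2)) ≤ cseq 11 * 90 := by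
    intro n hn
    induction n, hn using Nat.le_induction with
    | base => norm_num
    | succ n hn ih =>
      have hd := decay n hn
      have h1 : (0:ℝ) ≤ (n:ℝ) - 1 := by
        have : (11:ℝ) ≤ (n:ℝ) := by exact_mod_cast hn
        linarith
      push_cast
      calc cseq (n+1) * (((n:ℝ) + 1 - 1) * ((n:ℝ) + 1 - 2))
          = (cseq (n+1) * (n:ℝ)) * ((n:ℝ) - 1) := by ring
        _ ≤ (cseq n * ((n:ℝ) - 2)) * ((n:ℝ) - 1) := mul_le_mul_of_nonneg_right hd h1
        _ = cseq n * (((n:ℝ) - 1) * ((n:ℝ) - 2)) := by ring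
        _ ≤ cseq 11 * 90 := ih
  have bound : ∀ i : ℕ, cseq (i + 11) ≤ (4 * (cseq 11 * 90)) * (1 / ((i + 11 : ℕ):ℝ)^2) := by
    intro i
    have hn11 : 11 ≤ i + 11 := by omega
    have hxr : (11:ℝ) ≤ ((i+11:ℕ):ℝ) := by exact_mod_cast hn11
    have hx2 : (0:ℝ) < ((i+11:ℕ):ℝ)^2 := by nlinarith
    have hk := key (i+11) hn11
    have hsq : (((i+11:ℕ):ℝ))^2 ≤ 4 * ((((i+11:ℕ):ℝ) - 1) * (((i+11:ℕ):ℝ) - 2)) := by nlinarith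
    have h2 : cseq (i+11) * (((i+11:ℕ):ℝ))^2 ≤ 4 * (cseq 11 * 90) := by
      calc cseq (i+11) * (((i+11:ℕ):ℝ))^2
          ≤ cseq (i+11) * (4 * ((((i+11:ℕ):ℝ) - 1) * (((i+11:ℕ):ℝ) - 2))) :=
            mul_le_mul_of_nonneg_left hsq (cseq_nonneg _)
        _ = 4 * (cseq (i+11) * ((((i+11:ℕ):ℝ) - 1) * (((i+11:ℕ):ℝ) - 2))) := by ring
        _ ≤ 4 * (cseq 11 * 90) := by linarith
    rw [mul_one_div, le_div_iff₀ hx2]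
    exact h2
  have hs : Summable (fun i : ℕ => (4 * (cseq 11 * 90)) * (1 / ((i + 11 : ℕ):ℝ)^2)) := by
    have h0 : Summable (fun n : ℕ => 1 / ((n:ℕ):ℝ)^2) := Real.summable_one_div_nat_pow.2 one_lt_two
    exact ((summable_nat_add_iff 11).2 h0).mul_left _
  have h1 : Summable (fun i : ℕ => cseq (i + 11)) :=
    Summable.of_nonneg_of_le (fun i => cseq_nonneg _) bound hs
  exact (summable_nat_add_iff 11).1 h1

lemma ratio_eq (n : ℕ) (hn : n ≠ 0) :
    gseq n / gseq (n + 1) = 27 / 256 * (cseq n / cseq (n + 1)) := by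
  have h2 : gseq (n+1) ≠ 0 := (gseq_pos (Nat.succ_ne_zero n)).ne'
  have hp : ((27:ℝ)/256) ^ n ≠ 0 := by positivity
  rw [cseq, cseq, pow_succ]
  field_simp

lemma ratio_tendsto : Tendsto (fun n : ℕ => gseq n / gseq (n + 1)) atTop (𝓝 (27 / 256)) := by
  have hupper : Tendsto (fun n : ℕ => 27/256 * (1 + 13 / (n:ℝ))) atTop (𝓝 (27/256)) := by
    have h0 : Tendsto (fun n : ℕ => 13 / (n:ℝ)) atTop (𝓝 0) :=
      tendsto_const_div_atTop_nhds_zero_nat 13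
    have h2 := ((tendsto_const_nhds (x := (1:ℝ)) (f := atTop (α := ℕ))).add h0).const_mul
      ((27:ℝ)/256)
    have he : (27:ℝ)/256 * (1 + 0) = 27/256 := by norm_num
    rwa [he] at h2
  apply tendsto_of_tendsto_of_tendsto_of_le_of_le' tendsto_const_nhds hupper
  · filter_upwards [eventually_ge_atTop 1] with n hn
    have hn0 : n ≠ 0 := by omega
    rw [ratio_eq n hn0]
    have h1 : 0 < cseq (n+1) := cseq_pos (Nat.succ_ne_zero n)
    have h2 : cseq (n+1) ≤ cseq n := step_le n hn0
    have h3 : (1:ℝ) ≤ cseq n / cseq (n+1) := (one_le_div h1).2 h2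
    nlinarith
  · filter_upwards [eventually_ge_atTop 1] with n hn
    have hn0 : n ≠ 0 := by omega
    rw [ratio_eq n hn0]
    have h1 : 0 < cseq (n+1) := cseq_pos (Nat.succ_ne_zero n)
    have hx : (0:ℝ) < (n:ℝ) := by exact_mod_cast Nat.pos_of_ne_zero hn0
    have hg := step_ge n hn0
    have h4 : cseq n / cseq (n+1) ≤ ((n:ℝ)+13)/(n:ℝ) := by
      rw [div_le_div_iff₀ h1 hx]
      nlinarith
    have h5 : ((n:ℝ)+13)/(n:ℝ) = 1 + 13/(n:ℝ) := by field_simp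
    have h6 : cseq n / cseq (n+1) ≤ 1 + 13/(n:ℝ) := h5 ▸ h4
    nlinarith

lemma ratio_pow (k : ℕ) :
    Tendsto (fun n : ℕ => gseq (n - k) / gseq n) atTop (𝓝 ((27/256 : ℝ) ^ k)) := by
  induction k with
  | zero =>
    rw [pow_zero]
    refine Tendsto.congr' ?_ tendsto_const_nhds
    filter_upwards [eventually_ge_atTop 1] with n hn
    rw [Nat.sub_zero, div_self (gseq_pos (by omega)).ne']
  | succ k ih =>
    have h1 : Tendsto (fun n : ℕ => gseq (n - (k+1)) / gseq (n - k)) atTop (𝓝 (27/256)) := by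
      have hc := ratio_tendsto.comp (Filter.tendsto_sub_atTop_nat (k+1))
      refine hc.congr' ?_
      filter_upwards [eventually_ge_atTop (k+1)] with n hn
      have he : n - (k+1) + 1 = n - k := by omega
      simp only [Function.comp_apply, he]
    have h2 := h1.mul ih
    rw [show (27/256:ℝ) * (27/256:ℝ)^k = (27/256:ℝ)^(k+1) by rw [pow_succ]; ring] at h2
    refine h2.congr' ?_
    filter_upwards [eventually_ge_atTop (k+1)] with n hn
    have hb : gseq (n - k) ≠ 0 := (gseq_pos (by omega)).ne'
    exact div_mul_div_cancel₀ hb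

/-- Key uniform bound on the backward ratios. -/
lemma div_bound {n k : ℕ} (hk2 : 2 * k ≤ n) (hkn : k < n) :
    gseq (n - k) / gseq n ≤ (27/256 : ℝ)^k * Real.exp 13 := by
  have hn0 : n ≠ 0 := by omega
  have hnk0 : n - k ≠ 0 := by omega
  have hb := half_bound (m := n - k) (n := n) hnk0 (by omega) (by omega)
  have hρp : (0:ℝ) < (27/256:ℝ)^(n-k) := by positivity
  have hpow : ((27:ℝ)/256)^n = (27/256:ℝ)^(n-k) * (27/256:ℝ)^k := by
    rw [← pow_add]
    congr 1
    omega
  have hgn : 0 < gseq n := gseq_pos hn0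
  have h1 : gseq (n-k) * (27/256:ℝ)^(n-k) ≤
      (gseq n * ((27/256:ℝ)^k * Real.exp 13)) * (27/256:ℝ)^(n-k) := by
    simp only [cseq] at hb
    calc gseq (n-k) * (27/256:ℝ)^(n-k) ≤ gseq n * (27/256:ℝ)^n * Real.exp 13 := hb
      _ = (gseq n * ((27/256:ℝ)^k * Real.exp 13)) * (27/256:ℝ)^(n-k) := by rw [hpow]; ring
  have hb' : gseq (n-k) ≤ gseq n * ((27/256:ℝ)^k * Real.exp 13) :=
    le_of_mul_le_mul_right h1 hρp
  rw [div_le_iff₀ hgn, mul_comm]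
  exact hb'

end Stmt5Aux

open Stmt5Aux in
/-- With `A = ∑_{n≥1} g_n (27/256)ⁿ`, the ratio `[xⁿ](g(x))² / [xⁿ]g(x)`, i.e.
`(∑_{k=0}^n g_k g_{n-k}) / g_n`, tends to `2A`, and `2A > 0`. -/
theorem stmt_5 (A : ℝ) (hA : A = ∑' n : ℕ, gseq n * (27 / 256 : ℝ) ^ n) :
    Tendsto (fun n : ℕ => (∑ k ∈ Finset.range (n + 1), gseq k * gseq (n - k)) / gseq n)
        atTop (𝓝 (2 * A)) ∧
      0 < 2 * A := by
  have hsum : Summable cseq := summable_cseq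
  have hA' : A = ∑' k : ℕ, cseq k := hA
  have hApos : 0 < A := by
    have h1 : cseq 1 ≤ A := by
      rw [hA']
      exact Summable.le_tsum hsum 1 (fun j _ => cseq_nonneg j)
    have h2 : 0 < cseq 1 := cseq_pos one_ne_zero
    linarith
  constructor
  · -- decomposition of the convolution ratio
    have hF : ∀ n : ℕ, (∑ k ∈ Finset.range (n+1), gseq k * gseq (n-k)) / gseq n
        = 2 * (∑' k : ℕ, (if 2*k < n then gseq k * (gseq (n-k) / gseq n) else 0))
          + (∑ k ∈ Finset.range (n+1),
              (if 2*k = n then gseq k * (gseq (n-k) / gseq n) else 0)) := by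
      intro n
      have hts : (∑' k : ℕ, (if 2*k < n then gseq k * (gseq (n-k) / gseq n) else 0))
          = ∑ k ∈ Finset.range (n+1), (if 2*k < n then gseq k * (gseq (n-k) / gseq n) else 0) := by
        apply tsum_eq_sum
        intro k hk
        rw [Finset.mem_range] at hk
        rw [if_neg (by omega)]
      rw [hts, Finset.sum_div]
      have hsplit : ∀ k ∈ Finset.range (n+1), gseq k * gseq (n-k) / gseq n
          = (if 2*k < n then gseq k * (gseq (n-k) / gseq n) else 0)
            + (if 2*k = n then gseq k * (gseq (n-k) / gseq n) else 0)
            + (if n < 2*k then gseq k * (gseq (n-k) / gseq n) else 0) := by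
        intro k _
        rcases lt_trichotomy (2*k) n with h | h | h
        · rw [if_pos h, if_neg (by omega), if_neg (by omega), mul_div_assoc]; ring
        · rw [if_neg (by omega), if_pos h, if_neg (by omega), mul_div_assoc]; ring
        · rw [if_neg (by omega), if_neg (by omega), if_pos h, mul_div_assoc]; ring
      rw [Finset.sum_congr rfl hsplit]
      rw [Finset.sum_add_distrib, Finset.sum_add_distrib]
      have hrefl : (∑ k ∈ Finset.range (n+1), (if n < 2*k then gseq k * (gseq (n-k) / gseq n) else 0))
          = ∑ k ∈ Finset.range (n+1), (if 2*k < n then gseq k * (gseq (n-k) / gseq n) else 0) := by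
        rw [← Finset.sum_range_reflect
          (fun k => if n < 2*k then gseq k * (gseq (n-k) / gseq n) else 0) (n+1)]
        apply Finset.sum_congr rfl
        intro k hk
        rw [Finset.mem_range] at hk
        have h1 : n + 1 - 1 - k = n - k := by omega
        rw [h1]
        by_cases h : 2*k < n
        · rw [if_pos (by omega), if_pos h]
          have h2 : n - (n - k) = k := by omega
          rw [h2]
          ring
        · rw [if_neg (by omega), if_neg h]
      rw [hrefl]
      ring
    have hG : Tendsto
        (fun n : ℕ => ∑' k : ℕ, (if 2*k < n then gseq k * (gseq (n-k) / gseq n) else 0))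
        atTop (𝓝 A) := by
      rw [hA']
      apply tendsto_tsum_of_dominated_convergence
        (bound := fun k : ℕ => Real.exp 13 * cseq k)
      · exact hsum.mul_left _
      · intro k
        have hbase : Tendsto (fun n : ℕ => gseq k * (gseq (n-k) / gseq n)) atTop
            (𝓝 (gseq k * (27/256:ℝ)^k)) := tendsto_const_nhds.mul (ratio_pow k)
        have : cseq k = gseq k * (27/256:ℝ)^k := rfl
        rw [this]
        refine hbase.congr' ?_
        filter_upwards [eventually_ge_atTop (2*k+1)] with n hn
        rw [if_pos (by omega)]
      · apply Filter.Eventually.of_forall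
        intro n k
        by_cases h : 2*k < n
        · rw [if_pos h]
          have hgn : 0 < gseq n := gseq_pos (by omega)
          have hnn : 0 ≤ gseq k * (gseq (n-k) / gseq n) :=
            mul_nonneg (gseq_nonneg k) (div_nonneg (gseq_nonneg _) hgn.le)
          rw [Real.norm_eq_abs, abs_of_nonneg hnn]
          have hdiv := div_bound (n := n) (k := k) (by omega) (by omega)
          calc gseq k * (gseq (n-k) / gseq n)
              ≤ gseq k * ((27/256:ℝ)^k * Real.exp 13) :=
                mul_le_mul_of_nonneg_left hdiv (gseq_nonneg k)
            _ = Real.exp 13 * cseq k := by simp only [cseq]; ring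
        · rw [if_neg h]
          simp only [norm_zero]
          exact mul_nonneg (Real.exp_pos _).le (cseq_nonneg k)
    have hMid : Tendsto
        (fun n : ℕ => ∑ k ∈ Finset.range (n+1),
          (if 2*k = n then gseq k * (gseq (n-k) / gseq n) else 0))
        atTop (𝓝 0) := by
      apply squeeze_zero' (g := fun n : ℕ => Real.exp 13 * cseq (n / 2))
      · apply Filter.Eventually.of_forall
        intro n
        apply Finset.sum_nonneg
        intro k _
        split_ifs with h
        · exact mul_nonneg (gseq_nonneg k) (div_nonneg (gseq_nonneg _) (gseq_nonneg n))
        · exact le_rfl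
      · filter_upwards [eventually_ge_atTop 2] with n hn
        have hone : (∑ k ∈ Finset.range (n+1),
            (if 2*k = n then gseq k * (gseq (n-k) / gseq n) else 0))
            = (if 2*(n/2) = n then gseq (n/2) * (gseq (n - n/2) / gseq n) else 0) := by
          apply Finset.sum_eq_single (n/2)
          · intro b _ hb
            rw [if_neg (by omega)]
          · intro hmem
            exact absurd (Finset.mem_range.2 (by omega)) hmem
        rw [hone]
        split_ifs with h
        · have hdiv := div_bound (n := n) (k := n/2) (by omega) (by omega)
          calc gseq (n/2) * (gseq (n - n/2) / gseq n)
              ≤ gseq (n/2) * ((27/256:ℝ)^(n/2) * Real.exp 13) :=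
                mul_le_mul_of_nonneg_left hdiv (gseq_nonneg _)
            _ = Real.exp 13 * cseq (n/2) := by simp only [cseq]; ring
        · exact mul_nonneg (Real.exp_pos _).le (cseq_nonneg _)
      · have hdiv2 : Tendsto (fun n : ℕ => n / 2) atTop atTop :=
          Filter.tendsto_atTop_atTop.2 (fun b => ⟨2*b, fun n hn => by omega⟩)
        have h0 := (hsum.tendsto_atTop_zero.comp hdiv2).const_mul (Real.exp 13)
        simpa using h0
    have hcomb := (hG.const_mul (2:ℝ)).add hMid
    rw [add_zero] at hcomb
    exact hcomb.congr (fun n => (hF n).symm)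
  · linarith
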